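/- For every edge-colouring c : E(K↔_ℕ) → [r+1] of the complete symmetric digraph on ℕ for which there is no monochromatic directed path of edge-length ℓ_i in colour i for any i ∈ [r], the vertex set ℕ can be covered by ∏_{i≤r} ℓ_i pairwise vertex-disjoint monochromatic directed paths in colour r+1. -/

import Mathlib

/-- `l` is a finite directed path (a list of distinct vertices, with consecutive edges),
monochromatic in colour `j`, in the complete symmetric digraph on `V` edge-coloured by `c`.
Its edge-length is `l.length - 1`. -/
def IsMonoPathList {V : Type*} {N : ℕ} (c : V → V → Fin N) (j : Fin N) (l : List V) : Prop :=
  l.Nodup ∧ l.Chain' fun u v => c u v = j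

/-- `S` is the vertex set of a (finite or one-way infinite) directed path, monochromatic in
colour `j`, in the complete symmetric digraph on `V` edge-coloured by `c`. -/
def IsMonoPathSet {V : Type*} {N : ℕ} (c : V → V → Fin N) (j : Fin N) (S : Set V) : Prop :=
  (∃ l : List V, IsMonoPathList c j l ∧ S = {x | x ∈ l}) ∨
  (∃ f : ℕ → V, Function.Injective f ∧ (∀ n, c (f n) (f (n + 1)) = j) ∧ S = Set.range f)

/-!
For each of the first `r` colours `i`, the colour-`i` digraph has no path on `ℓ i + 1`
vertices, so by the Gallai–Roy theorem it has a proper vertex colouring `φ i` with `ℓ i`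
colours. For an infinite digraph this goes through a maximal acyclic subdigraph (Zorn's lemma):
colouring each vertex by the length of a longest subdigraph path starting there separates the
ends of its edges, and every other edge closes a cycle with it, so its ends are separated as
well. Inside a fibre of `v ↦ (φ i v)ᵢ` every edge has colour `r + 1`, in both directions, so
any enumeration of a fibre is a monochromatic path; there are `∏ ℓ i` fibres.
-/

open Relation

section AcyclicSubrelation

variable {α : Type*} {r : α → α → Prop}

theorem List.IsChain.nodup_of_acyclic (hr : ∀ x, ¬ TransGen r x x) {l : List α}
    (hl : l.IsChain r) : l.Nodup :=
  (hl.imp fun _ _ => TransGen.single).pairwise.imp (S := (· ≠ ·)) fun hab heq =>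
    hr _ (heq ▸ hab)

theorem Relation.ReflTransGen.of_sup_edge {u v a b : α}
    (h : ReflTransGen (fun x y => r x y ∨ x = u ∧ y = v) a b) :
    ReflTransGen r a b ∨ ReflTransGen r a u ∧ ReflTransGen r v b := by
  induction h using ReflTransGen.head_induction_on with
  | refl => exact .inl .refl
  | head hstep _ ih =>
    rcases hstep with hstep | ⟨rfl, rfl⟩
    · exact ih.imp (·.head hstep) fun ⟨hau, hvb⟩ => ⟨hau.head hstep, hvb⟩
    · exact .inr ⟨.refl, ih.elim id And.right⟩

theorem acyclic_sup_edge (hr : ∀ x, ¬ TransGen r x x) {u v : α}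
    (hvu : ¬ ReflTransGen r v u) :
    ∀ x, ¬ TransGen (fun x y => r x y ∨ x = u ∧ y = v) x x := by
  intro x hx
  obtain ⟨y, hxy, hyx⟩ := TransGen.head'_iff.mp hx
  rcases hxy with hxy | ⟨rfl, rfl⟩
  · rcases hyx.of_sup_edge with hyx | ⟨hyu, hvx⟩
    · exact hr x (TransGen.head'_iff.mpr ⟨y, hxy, hyx⟩)
    · exact hvu ((hvx.tail hxy).trans hyu)
  · exact hvu (hyx.of_sup_edge.elim id And.left)

theorem transGen_sSup_of_isChain {C : Set (α → α → Prop)} (hC : IsChain (· ≤ ·) C)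
    {a b : α} (h : TransGen (sSup C) a b) : ∃ s ∈ C, TransGen s a b := by
  induction h with
  | single hab =>
    obtain ⟨s, hs, hab⟩ : ∃ s ∈ C, s _ _ := by simpa using hab
    exact ⟨s, hs, .single hab⟩
  | tail _ hbc ih =>
    obtain ⟨s, hs, hab⟩ := ih
    obtain ⟨t, ht, hbc⟩ : ∃ t ∈ C, t _ _ := by simpa using hbc
    rcases hC.total hs ht with hst | hts
    · exact ⟨t, ht, (TransGen.mono hst _ _ hab).tail hbc⟩
    · exact ⟨s, hs, hab.tail (hts _ _ hbc)⟩

theorem exists_acyclic_le_forall_or_reflTransGen (G : α → α → Prop) :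
    ∃ r ≤ G, (∀ x, ¬ TransGen r x x) ∧
      ∀ u v, G u v → r u v ∨ ReflTransGen r v u := by
  obtain ⟨r, ⟨hrG, hr⟩, hmax⟩ := zorn_le₀ {r | r ≤ G ∧ ∀ x, ¬ TransGen r x x}
    fun C hCS hC => ⟨sSup C, ⟨sSup_le fun s hs => (hCS hs).1, fun x hx =>
      let ⟨s, hs, hxx⟩ := transGen_sSup_of_isChain hC hx; (hCS hs).2 x hxx⟩,
      fun _ => le_sSup⟩
  refine ⟨r, hrG, hr, fun u v huv => or_iff_not_imp_right.mpr fun hvu => ?_⟩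
  refine hmax ⟨?_, acyclic_sup_edge hr hvu⟩ (fun _ _ => .inl) u v (.inr ⟨rfl, rfl⟩)
  rintro x y (hxy | ⟨rfl, rfl⟩)
  exacts [hrG _ _ hxy, huv]

end AcyclicSubrelation

section GallaiRoy

variable {α : Type*}

theorem exists_fin_strictAnti_of_length_le {r : α → α → Prop} {L : ℕ}
    (hL : ∀ l : List α, l.IsChain r → l.length ≤ L) :
    ∃ h : α → Fin L, ∀ a b, r a b → h b < h a := by
  classical
  let Q a n := ∃ t : List α, (a :: t).IsChain r ∧ t.length = n
  have hQ_lt : ∀ a n, Q a n → n < L := fun a n ⟨t, ht, hn⟩ => by simpa [hn] using hL _ ht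
  -- `h a` is the number of edges of a longest `r`-chain starting at `a`
  let h a := Nat.findGreatest (Q a) L
  have hQ_h : ∀ a, Q a (h a) := fun a =>
    Nat.findGreatest_spec (Nat.zero_le _) ⟨[], .singleton a, rfl⟩
  refine ⟨fun a => ⟨h a, hQ_lt a _ (hQ_h a)⟩, fun a b hab => ?_⟩
  obtain ⟨t, ht, hn⟩ := hQ_h b
  have hQ_a : Q a (h b + 1) := ⟨b :: t, ht.cons_cons hab, by simp [hn]⟩
  exact Nat.le_findGreatest (hQ_lt a _ hQ_a).le hQ_a

/-- The Gallai–Roy theorem. -/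
theorem exists_fin_coloring_of_length_le (G : α → α → Prop) {L : ℕ}
    (hG : ∀ l : List α, l.Nodup → l.IsChain G → l.length ≤ L) :
    ∃ φ : α → Fin L, ∀ u v, u ≠ v → G u v → φ u ≠ φ v := by
  obtain ⟨r, hrG, hr, hGr⟩ := exists_acyclic_le_forall_or_reflTransGen G
  obtain ⟨h, hh⟩ := exists_fin_strictAnti_of_length_le (r := r) (L := L) fun l hl =>
    hG l (hl.nodup_of_acyclic hr) (hl.imp hrG)
  have hh_transGen : ∀ a b, TransGen r a b → h b < h a := fun a b hab => by
    induction hab with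
    | single hab => exact hh _ _ hab
    | tail _ hbc ih => exact (hh _ _ hbc).trans ih
  refine ⟨h, fun u v huv huvG => ?_⟩
  rcases hGr u v huvG with huv_r | hvu_r
  · exact (hh u v huv_r).ne'
  · exact (hh_transGen v u (reflTransGen_iff_eq_or_transGen.mp hvu_r |>.resolve_left huv)).ne

end GallaiRoy

theorem IsMonoPathList.length_le {V : Type*} {N : ℕ} {c : V → V → Fin N} {j : Fin N} {L : ℕ}
    (hno : ¬ ∃ l : List V, IsMonoPathList c j l ∧ l.length = L + 1) {l : List V}
    (hl : IsMonoPathList c j l) : l.length ≤ L := by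
  by_contra! hlen
  exact hno ⟨l.take (L + 1), ⟨hl.1.sublist (l.take_sublist _), hl.2.take _⟩, by simp; omega⟩

theorem isMonoPathSet_of_pairwise {V : Type*} [Countable V] {N : ℕ} {c : V → V → Fin N}
    {j : Fin N} {S : Set V} (hS : S.Pairwise fun u v => c u v = j) : IsMonoPathSet c j S := by
  rcases S.finite_or_infinite with hfin | hinf
  · refine .inl ⟨hfin.toFinset.toList, ⟨Finset.nodup_toList _, ?_⟩, by ext; simp⟩
    refine List.Pairwise.isChain ((Finset.nodup_toList _).imp_of_mem fun ha hb hab => ?_)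
    simp only [Finset.mem_toList, Set.Finite.mem_toFinset] at ha hb
    exact hS ha hb hab
  · have := hinf.to_subtype
    obtain ⟨e⟩ := nonempty_equiv_of_countable (α := ℕ) (β := S)
    refine .inr ⟨Subtype.val ∘ e, Subtype.val_injective.comp e.injective, fun n => ?_, ?_⟩
    · exact hS (e n).2 (e (n + 1)).2
        (Subtype.val_injective.ne (e.injective.ne n.succ_ne_self.symm))
    · rw [Set.range_comp, e.range_eq_univ, Set.image_univ, Subtype.range_coe]

theorem decomposition_nat_general (r : ℕ) (c : ℕ → ℕ → Fin (r + 1)) (ℓ : Fin r → ℕ)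
    (hno : ∀ i : Fin r,
      ¬ ∃ l : List ℕ, IsMonoPathList c i.castSucc l ∧ l.length = ℓ i + 1) :
    ∃ P : Fin (∏ i, ℓ i) → Set ℕ,
      (∀ k, IsMonoPathSet c (Fin.last r) (P k)) ∧
      (Pairwise fun a b => Disjoint (P a) (P b)) ∧
      (⋃ k, P k) = Set.univ := by
  choose φ hφ using fun i : Fin r =>
    exists_fin_coloring_of_length_le (fun u v => c u v = i.castSucc) fun _ hnd hl =>
      IsMonoPathList.length_le (hno i) ⟨hnd, hl⟩
  let Φ v : Fin (∏ i, ℓ i) := finPiFinEquiv fun i => φ i v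
  refine ⟨fun k => Φ ⁻¹' {k}, fun k => isMonoPathSet_of_pairwise fun u hu v hv huv => ?_,
    pairwise_disjoint_fiber Φ, by rw [← Set.preimage_iUnion, Set.iUnion_of_singleton]; rfl⟩
  rcases Fin.eq_castSucc_or_eq_last (c u v) with ⟨j, hj⟩ | hlast
  · exact absurd (congrFun (finPiFinEquiv.injective (hu.trans hv.symm)) j) (hφ j u v huv hj)
  · exact hlast

/-- For every `(r+1)`-edge-colouring of the complete symmetric digraph on `ℕ` with no
monochromatic directed path of edge-length `ℓ i` in colour `i` for any `i ∈ [r]`, the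
vertex set `ℕ` can be covered by `∏ i, ℓ i` pairwise disjoint monochromatic directed paths
in colour `r+1`. -/
theorem decomposition_nat (r : ℕ) (c : ℕ → ℕ → Fin (r + 1)) (ℓ : Fin r → ℕ)
    (hℓ : ∀ i, 0 < ℓ i)
    (hno : ∀ i : Fin r,
      ¬ ∃ l : List ℕ, IsMonoPathList c i.castSucc l ∧ l.length = ℓ i + 1) :
    ∃ P : Fin (∏ i, ℓ i) → Set ℕ,
      (∀ k, IsMonoPathSet c (Fin.last r) (P k)) ∧
      (Pairwise fun a b => Disjoint (P a) (P b)) ∧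
      (⋃ k, P k) = Set.univ :=
  decomposition_nat_general r c ℓ hno
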